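/- arXiv:1807.08194 — 3 statements merged into one kernel-verified Lean document; each statement's English description precedes it below -/
import Mathlib

section
/- Under the hypotheses of the sampling lemma (|L| ≤ Δ, V finite of size K, T ≥ (2Δ²/ε²)·log(2K/δ) i.i.d. samples), if (S_u, S_v) is an equilibrium (ε = 0) with value V₀, then with probability at least 1 − δ the empirical mixture Ŝ_u satisfies: for all v ∈ V, E_{u~Ŝ_u}[L(u,v)] ≤ V₀ + ε; i.e., the finite uniform mixture of T generators is an ε-approximately optimal min-strategy. -/
noncomputable def mixExp {α : Type*} (S : α →₀ ℝ) (f : α → ℝ) : ℝ :=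
  ∑ a ∈ S.support, S a * f a

def IsMix {α : Type*} (S : α →₀ ℝ) : Prop :=
  (∀ a, 0 ≤ S a) ∧ ∑ a ∈ S.support, S a = 1

/-- Expectation of `f` under the empirical (uniform) distribution of the samples `us`. -/
noncomputable def empExp {α : Type*} (T : ℕ) (us : Fin T → α) (f : α → ℝ) : ℝ :=
  (∑ i, f (us i)) / T

open Classical in
/-- Probability, under `T` i.i.d. draws from the finitely supported mixed
strategy `S`, that the sample tuple satisfies `P`. -/
noncomputable def iidProb {α : Type*} (S : α →₀ ℝ) (T : ℕ)
    (P : (Fin T → α) → Prop) : ℝ :=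
  ∑ us : Fin T → S.support,
    (if P (fun i => (us i : α)) then ∏ i, S (us i) else 0)

def IsApproxEq {U V : Type*} (L : U → V → ℝ) (Su : U →₀ ℝ) (Sv : V →₀ ℝ)
    (ε V₀ : ℝ) : Prop :=
  (∀ u, V₀ - ε ≤ mixExp Sv (fun v => L u v)) ∧
  (∀ v, mixExp Su (fun u => L u v) ≤ V₀ + ε)

/-! For a fixed column `v`, the payoff `L · v` is bounded by `Δ` and has mean at most `V₀`
under `S_u`. Chernoff's method bounds the chance that its empirical mean over `T` i.i.d. draws
exceeds `V₀ + ε`: the exponential moment of the sum factorises over the draws and each factor is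
controlled by Hoeffding's lemma, giving `exp (-T ε² / (2Δ²)) ≤ δ / (2K)`. A union bound over the
`K` columns finishes. -/

open Real Finset MeasureTheory ProbabilityTheory

section IidProb

variable {α : Type*} {S : α →₀ ℝ} {T : ℕ}

theorem mixExp_const_mul (S : α →₀ ℝ) (c : ℝ) (f : α → ℝ) :
    mixExp S (fun a => c * f a) = c * mixExp S f := by
  simp only [mixExp, mul_sum, mul_left_comm]

/-- **Hoeffding's lemma** for a finitely supported mixed strategy. -/
theorem mixExp_exp_mul_le (hS : IsMix S) {X : α → ℝ} {Δ : ℝ} (hX : ∀ a, |X a| ≤ Δ) (t : ℝ) :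
    mixExp S (fun a => exp (t * X a)) ≤ exp (t * mixExp S X + Δ ^ 2 * t ^ 2 / 2) := by
  let _ : MeasurableSpace α := ⊤
  set μ : Measure α := ∑ a ∈ S.support, ENNReal.ofReal (S a) • Measure.dirac a
  have integral_eq (f : α → ℝ) : ∫ a, f a ∂μ = mixExp S f := by
    rw [integral_finsetSum_measure]
    · simp [mixExp, integral_smul_measure, ENNReal.toReal_ofReal (hS.1 _)]
    · exact fun a _ => (integrable_dirac (by simp)).smul_measure (by simp)
  have : IsProbabilityMeasure μ := ⟨by
    simp [μ, ← ENNReal.ofReal_sum_of_nonneg (fun a _ => hS.1 a), hS.2]⟩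
  have hoeffding := (hasSubgaussianMGF_of_mem_Icc (X := X) (μ := μ) (a := -Δ) (b := Δ)
    Measurable.of_discrete.aemeasurable (ae_of_all _ fun a => abs_le.1 (hX a))).mgf_le t
  have hvar : (((‖Δ - -Δ‖₊ / 2) ^ 2 : NNReal) : ℝ) = Δ ^ 2 := by
    simp [sub_neg_eq_add, ← two_mul, sq_abs]
  have hmgf : mgf (fun a => X a - μ[X]) μ t =
      exp (-(t * mixExp S X)) * mixExp S (fun a => exp (t * X a)) := by
    simp only [mgf, integral_eq]
    rw [← mixExp_const_mul]
    congr 1 with a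
    rw [← exp_add]
    ring_nf
  rw [hmgf, hvar] at hoeffding
  calc mixExp S (fun a => exp (t * X a))
      = exp (t * mixExp S X) * (exp (-(t * mixExp S X)) * mixExp S (fun a => exp (t * X a))) := by
        rw [← mul_assoc, ← exp_add, add_neg_cancel, exp_zero, one_mul]
    _ ≤ exp (t * mixExp S X) * exp (Δ ^ 2 * t ^ 2 / 2) := by gcongr
    _ = _ := (exp_add _ _).symm

theorem mixExp_nonneg (hS : ∀ a, 0 ≤ S a) {f : α → ℝ} (hf : ∀ a, 0 ≤ f a) :
    0 ≤ mixExp S f :=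
  sum_nonneg fun a _ => mul_nonneg (hS a) (hf a)

theorem sum_pi_support_prod (S : α →₀ ℝ) (T : ℕ) (f : α → ℝ) :
    ∑ us : Fin T → S.support, ∏ i, f (us i) = (∑ a ∈ S.support, f a) ^ T := by
  rw [← sum_coe_sort S.support, Fintype.sum_pow]

theorem iidProb_add_iidProb_not (hS : IsMix S) (P : (Fin T → α) → Prop) :
    iidProb S T P + iidProb S T (fun us => ¬ P us) = 1 := by
  rw [iidProb, iidProb, ← sum_add_distrib]
  calc _ = ∑ us : Fin T → S.support, ∏ i, S (us i) := by
        refine sum_congr rfl fun us _ => ?_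
        by_cases h : P (fun i => (us i : α)) <;> simp [h]
    _ = 1 := by rw [sum_pi_support_prod S T S, hS.2, one_pow]

theorem iidProb_exists_le_sum (hS : ∀ a, 0 ≤ S a) {ι : Type*} [Fintype ι]
    (P : ι → (Fin T → α) → Prop) :
    iidProb S T (fun us => ∃ v, P v us) ≤ ∑ v, iidProb S T (P v) := by
  classical
  simp only [iidProb]
  rw [sum_comm]
  refine sum_le_sum fun us _ => ?_
  have hw : 0 ≤ ∏ i, S (us i) := prod_nonneg fun i _ => hS _
  have hterm (v : ι) : 0 ≤ if P v (fun i => (us i : α)) then ∏ i, S (us i) else 0 := by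
    split_ifs <;> simp [hw]
  split_ifs with h
  · obtain ⟨v, hv⟩ := h
    exact (if_pos hv).symm.le.trans (single_le_sum (fun v _ => hterm v) (mem_univ v))
  · exact sum_nonneg fun v _ => hterm v

/-- Markov's inequality for the product weight `∏ i, g (us i)`, whose expectation factorises. -/
theorem iidProb_le_mixExp_pow (hS : ∀ a, 0 ≤ S a) {g : α → ℝ} (hg : ∀ a, 0 ≤ g a)
    {P : (Fin T → α) → Prop} (hP : ∀ us, P us → 1 ≤ ∏ i, g (us i)) :
    iidProb S T P ≤ mixExp S g ^ T := by
  rw [iidProb, mixExp, ← sum_pi_support_prod]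
  refine sum_le_sum fun us _ => ?_
  rw [prod_mul_distrib]
  split_ifs with h
  · exact le_mul_of_one_le_right (prod_nonneg fun i _ => hS _) (hP _ h)
  · exact mul_nonneg (prod_nonneg fun i _ => hS _) (prod_nonneg fun i _ => hg _)

end IidProb

theorem mul_le_sum_of_lt_empExp {α : Type*} {T : ℕ} {us : Fin T → α} {f : α → ℝ} {c : ℝ}
    (h : c < empExp T us f) : T * c ≤ ∑ i, f (us i) := by
  rcases T.eq_zero_or_pos with rfl | hT
  · simp
  · rw [empExp, lt_div_iff₀ (by exact_mod_cast hT)] at h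
    linarith

/-- **Hoeffding's inequality** for the empirical mean of `T` i.i.d. draws from `S`. -/
theorem iidProb_lt_empExp_le {α : Type*} {S : α →₀ ℝ} (hS : IsMix S) (T : ℕ) {X : α → ℝ}
    {Δ ε m : ℝ} (hΔ : 0 < Δ) (hε : 0 ≤ ε) (hX : ∀ a, |X a| ≤ Δ) (hm : mixExp S X ≤ m) :
    iidProb S T (fun us => m + ε < empExp T us X) ≤ exp (-(T * (ε ^ 2 / (2 * Δ ^ 2)))) := by
  set t := ε / Δ ^ 2
  have ht : 0 ≤ t := by positivity
  have hchernoff : iidProb S T (fun us => m + ε < empExp T us X) ≤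
      mixExp S (fun a => exp (t * (X a - (m + ε)))) ^ T := by
    refine iidProb_le_mixExp_pow hS.1 (fun a => (exp_pos _).le) fun us h => ?_
    rw [← exp_sum, one_le_exp_iff, ← mul_sum, sum_sub_distrib, sum_const, card_univ,
      Fintype.card_fin, nsmul_eq_mul]
    exact mul_nonneg ht (sub_nonneg.2 (mul_le_sum_of_lt_empExp h))
  have hmix : mixExp S (fun a => exp (t * (X a - (m + ε)))) ≤ exp (-(ε ^ 2 / (2 * Δ ^ 2))) :=
    calc mixExp S (fun a => exp (t * (X a - (m + ε))))
        = exp (-(t * (m + ε))) * mixExp S (fun a => exp (t * X a)) := by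
          rw [← mixExp_const_mul]
          congr 1 with a
          rw [← exp_add]
          ring_nf
      _ ≤ exp (-(t * (m + ε))) * exp (t * mixExp S X + Δ ^ 2 * t ^ 2 / 2) := by
          gcongr
          exact mixExp_exp_mul_le hS hX t
      _ ≤ exp (-(t * (m + ε))) * exp (t * m + Δ ^ 2 * t ^ 2 / 2) := by gcongr
      _ = exp (-(ε ^ 2 / (2 * Δ ^ 2))) := by
          rw [← exp_add]
          congr 1
          simp only [t]
          field_simp
          ring
  calc _ ≤ exp (-(ε ^ 2 / (2 * Δ ^ 2))) ^ T :=
        hchernoff.trans (pow_le_pow_left₀ (mixExp_nonneg hS.1 fun a => (exp_pos _).le) hmix T)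
    _ = _ := by rw [← exp_nat_mul, neg_mul_eq_mul_neg]

theorem stmt_7_general {U V : Type*} [Fintype V]
    (L : U → V → ℝ) (Δ ε δ : ℝ) (K : ℕ) (hK : Fintype.card V = K)
    (hΔ : 0 < Δ) (hε : 0 < ε) (hδ : 0 < δ)
    (hb : ∀ u v, |L u v| ≤ Δ)
    (Su : U →₀ ℝ) (Sv : V →₀ ℝ) (hSu : IsMix Su)
    (V₀ : ℝ) (heq : IsApproxEq L Su Sv 0 V₀) (T : ℕ)
    (hT : 2 * Δ ^ 2 / ε ^ 2 * Real.log (2 * K / δ) ≤ (T : ℝ)) :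
    1 - δ ≤ iidProb Su T (fun us => ∀ v,
      empExp T us (fun u => L u v) ≤ V₀ + ε) := by
  have hbad (v : V) :
      iidProb Su T (fun us => V₀ + ε < empExp T us (fun u => L u v)) ≤ δ / (2 * K) := by
    have hKpos : (0 : ℝ) < K := by
      rw [← hK]; exact_mod_cast Fintype.card_pos_iff.2 ⟨v⟩
    have hlog : log (2 * K / δ) ≤ T * (ε ^ 2 / (2 * Δ ^ 2)) :=
      calc log (2 * K / δ) = 2 * Δ ^ 2 / ε ^ 2 * log (2 * K / δ) * (ε ^ 2 / (2 * Δ ^ 2)) := by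
            field_simp
        _ ≤ T * (ε ^ 2 / (2 * Δ ^ 2)) := by gcongr
    calc _ ≤ exp (-(T * (ε ^ 2 / (2 * Δ ^ 2)))) :=
          iidProb_lt_empExp_le hSu T hΔ hε.le (fun u => hb u v) (by simpa using heq.2 v)
      _ ≤ exp (-log (2 * K / δ)) := exp_le_exp.2 (neg_le_neg hlog)
      _ = δ / (2 * K) := by rw [exp_neg, exp_log (by positivity), inv_div]
  have hunion := iidProb_exists_le_sum hSu.1 fun v us => V₀ + ε < empExp T us fun u => L u v
  have hcompl := iidProb_add_iidProb_not hSu fun us => ∀ v, empExp T us (fun u => L u v) ≤ V₀ + ε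
  simp only [not_forall, not_le] at hcompl
  have hsum : ∑ v : V, δ / (2 * K) ≤ δ := by
    rw [sum_const, card_univ, hK, nsmul_eq_mul]
    rcases K.eq_zero_or_pos with rfl | hKpos
    · simpa using hδ.le
    · have hK0 : (K : ℝ) ≠ 0 := by positivity
      have : (K : ℝ) * (δ / (2 * K)) = δ / 2 := by field_simp
      linarith
  linarith [hunion.trans ((sum_le_sum fun v _ => hbad v).trans hsum)]

theorem stmt_7 {U V : Type*} [Fintype V]
    (L : U → V → ℝ) (Δ ε δ : ℝ) (K : ℕ) (hK : Fintype.card V = K)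
    (hΔ : 0 < Δ) (hε : 0 < ε) (hδ : 0 < δ)
    (hb : ∀ u v, |L u v| ≤ Δ)
    (Su : U →₀ ℝ) (Sv : V →₀ ℝ) (hSu : IsMix Su) (hSv : IsMix Sv)
    (V₀ : ℝ) (heq : IsApproxEq L Su Sv 0 V₀) (T : ℕ)
    (hT : 2 * Δ ^ 2 / ε ^ 2 * Real.log (2 * K / δ) ≤ (T : ℝ)) :
    1 - δ ≤ iidProb Su T (fun us => ∀ v,
      empExp T us (fun u => L u v) ≤ V₀ + ε) :=
  stmt_7_general L Δ ε δ K hK hΔ hε hδ hb Su Sv hSu V₀ heq T hT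
end

section
/- Combining covering and sampling: if V ⊆ ℝ^m is compact with an (ε/(2L'))-net of size K, v ↦ L(u,v) is L'-Lipschitz uniformly in u, |L| ≤ Δ, and (S_u, S_v) is an exact equilibrium with value V₀, then for T ≥ (8Δ²/ε²)·log(2K/δ), the uniform mixture Ŝ_u of T i.i.d. samples from S_u satisfies, with probability at least 1 − δ, sup_{v∈V} E_{u~Ŝ_u}[L(u,v)] ≤ V₀ + ε. -/
/-!
If the empirical mean of `L(·, n)` stays below `V₀ + ε/2` at every point `n` of the net, then by
the Lipschitz bound it stays below `V₀ + ε` on all of `V`. At a net point the true mean is at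
most `V₀` (the equilibrium condition), so by Hoeffding's inequality the empirical mean exceeds
`V₀ + ε/2` with probability at most `exp (-T ε² / (8 Δ²)) ≤ δ / (2K)`; a union bound over the
`K` net points concludes. To apply Hoeffding's inequality for independent bounded variables,
`iidProb` is identified with the `T`-fold product of the law of one draw from `S_u`.
-/

open MeasureTheory ProbabilityTheory Real

theorem measureReal_pi_integral_add_le_empExp_le {Ω : Type*} [MeasurableSpace Ω]
    (μ : Measure Ω) [IsProbabilityMeasure μ] {f : Ω → ℝ} (hf : Measurable f) {a b : ℝ}
    (hab : ∀ ω, f ω ∈ Set.Icc a b) (T : ℕ) {t : ℝ} (ht : 0 ≤ t) :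
    (Measure.pi fun _ : Fin T => μ).real {x | μ[f] + t ≤ empExp T x f} ≤
      exp (-2 * T * t ^ 2 / (b - a) ^ 2) := by
  rcases T.eq_zero_or_pos with rfl | hT
  · simp
  have hT' : (0 : ℝ) < T := Nat.cast_pos.2 hT
  have hsubG : ∀ i : Fin T, HasSubgaussianMGF (fun x : Fin T → Ω => f (x i) - μ[f])
      ((‖b - a‖₊ / 2) ^ 2) (Measure.pi fun _ => μ) := fun i =>
    .of_map (X := fun ω => f ω - μ[f]) (measurable_pi_apply i).aemeasurable <| by
      rw [(measurePreserving_eval (fun _ => μ) i).map_eq]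
      exact hasSubgaussianMGF_of_mem_Icc hf.aemeasurable (ae_of_all _ hab)
  have hindep : iIndepFun (fun i (x : Fin T → Ω) => f (x i) - μ[f]) (Measure.pi fun _ => μ) :=
    iIndepFun_pi (X := fun _ ω => f ω - μ[f]) fun _ => (hf.sub_const _).aemeasurable
  calc _ ≤ (Measure.pi fun _ : Fin T => μ).real
        {x | T * t ≤ ∑ i, (f (x i) - μ[f])} := by
        refine measureReal_mono (fun x hx => ?_)
        simp only [Set.mem_ofPred_eq, empExp, le_div_iff₀ hT'] at hx ⊢
        rw [Finset.sum_sub_distrib]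
        simp only [Finset.sum_const, Finset.card_univ, Fintype.card_fin, nsmul_eq_mul]
        linarith
    _ ≤ exp (-(T * t) ^ 2 / (2 * ∑ _i : Fin T, ((‖b - a‖₊ / 2) ^ 2 : NNReal))) :=
        HasSubgaussianMGF.measure_sum_ge_le_of_iIndepFun hindep (fun i _ => hsubG i) (by positivity)
    _ = exp (-2 * T * t ^ 2 / (b - a) ^ 2) := by
        congr 1
        simp only [Finset.sum_const, Finset.card_univ, Fintype.card_fin, nsmul_eq_mul]
        push_cast
        rw [Real.norm_eq_abs, div_pow, sq_abs]
        field_simp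

namespace IsMix

variable {α : Type*} {S : α →₀ ℝ} (hS : IsMix S)

noncomputable def toPMF : PMF S.support :=
  PMF.ofFintype (fun a => ENNReal.ofReal (S a)) <| by
    rw [Finset.sum_coe_sort S.support fun a => ENNReal.ofReal (S a),
      ← ENNReal.ofReal_sum_of_nonneg fun a _ => hS.1 a, hS.2, ENNReal.ofReal_one]

theorem toReal_toPMF (a : S.support) : (hS.toPMF a).toReal = S a :=
  ENNReal.toReal_ofReal (hS.1 a)

variable [MeasurableSpace α] [MeasurableSingletonClass α]

theorem integral_toMeasure_eq_mixExp (f : α → ℝ) :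
    ∫ a, f a ∂hS.toPMF.toMeasure = mixExp S f := by
  rw [PMF.integral_eq_sum]
  simp only [toReal_toPMF, smul_eq_mul]
  exact Finset.sum_coe_sort S.support fun a => S a * f a

theorem iidProb_eq_measureReal (T : ℕ) (P : (Fin T → α) → Prop) :
    iidProb S T P = (Measure.pi fun _ : Fin T => hS.toPMF.toMeasure).real
      {x | P fun i => x i} := by
  classical
  have hset : {x : Fin T → S.support | P fun i => x i} =
      ↑(Finset.univ.filter fun x : Fin T → S.support => P fun i => x i) := by
    ext; simp
  rw [hset, ← sum_measureReal_singleton, iidProb, Finset.sum_filter]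
  refine Finset.sum_congr rfl fun x _ => ?_
  split_ifs
  · rw [measureReal_def, Measure.pi_singleton, ENNReal.toReal_prod]
    simp only [PMF.toMeasure_apply_singleton _ _ (measurableSet_singleton _), toReal_toPMF]
  · rfl

theorem measureReal_pi_add_le_empExp_le {f : α → ℝ} {Δ c t : ℝ} (hf : ∀ a, |f a| ≤ Δ)
    (hc : mixExp S f ≤ c) (ht : 0 ≤ t) (T : ℕ) :
    (Measure.pi fun _ : Fin T => hS.toPMF.toMeasure).real
        {x | c + t ≤ empExp T (fun i => (x i : α)) f} ≤ exp (-(T * (t ^ 2 / (2 * Δ ^ 2)))) := by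
  calc _ ≤ (Measure.pi fun _ : Fin T => hS.toPMF.toMeasure).real
        {x | (∫ a, f a ∂hS.toPMF.toMeasure) + t ≤ empExp T x (fun a => f a)} :=
        measureReal_mono fun x hx => by
          simp only [Set.mem_ofPred_eq, hS.integral_toMeasure_eq_mixExp] at hx ⊢
          exact le_trans (by linarith) hx
    _ ≤ exp (-2 * T * t ^ 2 / (Δ - -Δ) ^ 2) :=
        measureReal_pi_integral_add_le_empExp_le (f := fun a : S.support => f a) _
          (measurable_of_finite _) (fun a => abs_le.1 (hf a)) T ht
    _ = exp (-(T * (t ^ 2 / (2 * Δ ^ 2)))) := by ring_nf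

end IsMix

theorem one_sub_sum_measureReal_le {Ω ι : Type*} [MeasurableSpace Ω] {μ : Measure Ω}
    [IsProbabilityMeasure μ] {A : Set Ω} (s : Finset ι) (B : ι → Set Ω)
    (h : Aᶜ ⊆ ⋃ i ∈ s, B i) : 1 - ∑ i ∈ s, μ.real (B i) ≤ μ.real A := by
  have hcover : 1 ≤ μ.real A + μ.real Aᶜ := by
    simpa [Set.union_compl_self] using measureReal_union_le (μ := μ) A Aᶜ
  linarith [(measureReal_mono h (measure_ne_top μ _)).trans (measureReal_biUnion_finset_le s B)]

theorem exp_neg_mul_le_of_inv_mul_log_inv_le {c p T : ℝ} (hc : 0 < c) (hp : 0 < p)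
    (hT : c⁻¹ * log p⁻¹ ≤ T) : exp (-(T * c)) ≤ p := by
  rw [← le_log_iff_exp_le hp, neg_le, ← log_inv]
  rwa [inv_mul_le_iff₀ hc, mul_comm] at hT

theorem empExp_le_add {α : Type*} {T : ℕ} (us : Fin T → α) {f g : α → ℝ} {c : ℝ}
    (hc : 0 ≤ c) (h : ∀ a, f a ≤ g a + c) : empExp T us f ≤ empExp T us g + c := by
  rcases T.eq_zero_or_pos with rfl | hT
  · simpa [empExp] using hc
  have hT' : (0 : ℝ) < T := Nat.cast_pos.2 hT
  rw [empExp, empExp, div_add' _ _ _ hT'.ne', div_le_div_iff_of_pos_right hT']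
  calc ∑ i, f (us i) ≤ ∑ i, (g (us i) + c) := Finset.sum_le_sum fun i _ => h _
    _ = ∑ i, g (us i) + c * T := by simp [Finset.sum_add_distrib, mul_comm]

theorem empExp_le_of_forall_mem_net {U E : Type*} [PseudoMetricSpace E] {L : U → E → ℝ}
    {L' r c : ℝ} (hL' : 0 ≤ L') (hlip : ∀ u v w, |L u v - L u w| ≤ L' * dist v w)
    {V : Set E} {N : Finset E} (hnet : ∀ v ∈ V, ∃ n ∈ N, dist v n ≤ r) {T : ℕ}
    (us : Fin T → U) (h : ∀ n ∈ N, empExp T us (fun u => L u n) < c) :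
    ∀ v ∈ V, empExp T us (fun u => L u v) ≤ c + L' * r := by
  intro v hv
  obtain ⟨n, hn, hdist⟩ := hnet v hv
  have hclose : ∀ u, L u v ≤ L u n + L' * r := fun u => by
    linarith [(abs_le.1 (hlip u v n)).2, mul_le_mul_of_nonneg_left hdist hL']
  have := empExp_le_add us (mul_nonneg hL' (dist_nonneg.trans hdist)) hclose
  linarith [h n hn]

theorem stmt_9_general {U : Type*} {m : ℕ}
    (Vset : Set (EuclideanSpace ℝ (Fin m)))
    (L : U → EuclideanSpace ℝ (Fin m) → ℝ) (Δ L' ε δ : ℝ)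
    (hΔ : 0 < Δ) (hL' : 0 < L') (hε : 0 < ε) (hδ : 0 < δ)
    (hb : ∀ u v, |L u v| ≤ Δ)
    (hlip : ∀ u v₁ v₂, |L u v₁ - L u v₂| ≤ L' * dist v₁ v₂)
    (N : Finset (EuclideanSpace ℝ (Fin m))) (K : ℕ) (hKcard : N.card = K)
    (hNsub : ↑N ⊆ Vset)
    (hnet : ∀ v ∈ Vset, ∃ n ∈ N, dist v n ≤ ε / (2 * L'))
    (Su : U →₀ ℝ) (hSu : IsMix Su)
    (Sv : EuclideanSpace ℝ (Fin m) →₀ ℝ)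
    (V₀ : ℝ)
    (heq : (∀ u, V₀ ≤ mixExp Sv (fun v => L u v)) ∧
           (∀ v ∈ Vset, mixExp Su (fun u => L u v) ≤ V₀))
    (T : ℕ) (hT : 8 * Δ ^ 2 / ε ^ 2 * Real.log (2 * K / δ) ≤ (T : ℝ)) :
    1 - δ ≤ iidProb Su T (fun us => ∀ v ∈ Vset,
      empExp T us (fun u => L u v) ≤ V₀ + ε) := by
  let _ : MeasurableSpace U := ⊤
  rw [hSu.iidProb_eq_measureReal]
  set μ := Measure.pi fun _ : Fin T => hSu.toPMF.toMeasure
  set bad := fun n => {x : Fin T → Su.support |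
    V₀ + ε / 2 ≤ empExp T (fun i => (x i : U)) fun u => L u n}
  have hT' : ((ε / 2) ^ 2 / (2 * Δ ^ 2))⁻¹ * log (δ / (2 * K))⁻¹ ≤ T := by
    rwa [inv_div, inv_div, show 2 * Δ ^ 2 / (ε / 2) ^ 2 = 8 * Δ ^ 2 / ε ^ 2 by ring]
  have hbad : ∀ n ∈ N, μ.real (bad n) ≤ δ / (2 * K) := fun n hn =>
    (hSu.measureReal_pi_add_le_empExp_le (fun u => hb u n) (heq.2 n (hNsub hn))
      (by positivity) T).trans <| exp_neg_mul_le_of_inv_mul_log_inv_le (by positivity)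
        (have : 0 < K := hKcard ▸ Finset.card_pos.2 ⟨n, hn⟩; by positivity) hT'
  have hcover : {x : Fin T → Su.support |
      ∀ v ∈ Vset, empExp T (fun i => (x i : U)) (fun u => L u v) ≤ V₀ + ε}ᶜ ⊆
      ⋃ n ∈ N, bad n := Set.compl_subset_comm.2 fun x hx v hv => by
    simp only [bad, Set.mem_compl_iff, Set.mem_iUnion, Set.mem_ofPred_eq, not_exists] at hx
    have hr : L' * (ε / (2 * L')) = ε / 2 := by field_simp
    linarith [empExp_le_of_forall_mem_net hL'.le hlip hnet _ (fun n hn => not_le.1 (hx n hn)) v hv]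
  have hunion : ∑ n ∈ N, μ.real (bad n) ≤ δ := by
    refine (Finset.sum_le_card_nsmul N _ _ hbad).trans ?_
    rw [nsmul_eq_mul, hKcard, mul_div_left_comm]
    exact mul_le_of_le_one_right hδ.le (div_le_one_of_le₀ (by linarith) (by positivity))
  linarith [one_sub_sum_measureReal_le (μ := μ) N bad hcover]

theorem stmt_9 {U : Type*} {m : ℕ}
    (Vset : Set (EuclideanSpace ℝ (Fin m))) (hcomp : IsCompact Vset)
    (L : U → EuclideanSpace ℝ (Fin m) → ℝ) (Δ L' ε δ : ℝ)
    (hΔ : 0 < Δ) (hL' : 0 < L') (hε : 0 < ε) (hδ : 0 < δ)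
    (hb : ∀ u v, |L u v| ≤ Δ)
    (hlip : ∀ u v₁ v₂, |L u v₁ - L u v₂| ≤ L' * dist v₁ v₂)
    (N : Finset (EuclideanSpace ℝ (Fin m))) (K : ℕ) (hKcard : N.card = K)
    (hNsub : ↑N ⊆ Vset)
    (hnet : ∀ v ∈ Vset, ∃ n ∈ N, dist v n ≤ ε / (2 * L'))
    (Su : U →₀ ℝ) (hSu : IsMix Su)
    (Sv : EuclideanSpace ℝ (Fin m) →₀ ℝ) (hSv : IsMix Sv)
    (hsupp : ↑Sv.support ⊆ Vset) (V₀ : ℝ)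
    (heq : (∀ u, V₀ ≤ mixExp Sv (fun v => L u v)) ∧
           (∀ v ∈ Vset, mixExp Su (fun u => L u v) ≤ V₀))
    (T : ℕ) (hT : 8 * Δ ^ 2 / ε ^ 2 * Real.log (2 * K / δ) ≤ (T : ℝ)) :
    1 - δ ≤ iidProb Su T (fun us => ∀ v ∈ Vset,
      empExp T us (fun u => L u v) ≤ V₀ + ε) :=
  stmt_9_general Vset L Δ L' ε δ hΔ hL' hε hδ hb hlip N K hKcard hNsub hnet Su hSu Sv V₀ heq T hT
end

section
/- If the generator class can approximate any point mass exactly (for every x in the data space X there is u with G_u = δ_x) and the discriminator outputting constantly 1/2 is in the discriminator class, and the payoff is L(u,v) = E_{x~μ}[φ(D_v(x))] + E_{x~G_u}[φ(1 − D_v(x))] with φ concave, then the value of the game is at most 2φ(1/2): there is a mixed generator strategy S_u (namely μ itself pushed onto generators) such that for the constant-1/2 discriminator v₀, L is exactly 2φ(1/2), and for every discriminator v, E_{u~S_u}[L(u,v)] = E_{x~μ}[φ(D_v(x)) + φ(1 − D_v(x))] ≤ 2φ(1/2). -/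
lemma mixExp_eq_sum {α : Type*} (S : α →₀ ℝ) (f : α → ℝ) :
    mixExp S f = S.sum (fun a m => m * f a) := rfl

lemma mixExp_mapDomain {α β : Type*} (S : α →₀ ℝ) (g : α → β) (f : β → ℝ) :
    mixExp (Finsupp.mapDomain g S) f = S.sum (fun a m => m * f (g a)) := by
  rw [mixExp_eq_sum, Finsupp.sum_mapDomain_index]
  · intro b; ring
  · intro b m₁ m₂; ring

lemma mixExp_single {α : Type*} (x : α) (f : α → ℝ) :
    mixExp (Finsupp.single x (1 : ℝ)) f = f x := by
  simp [mixExp, Finsupp.support_single_ne_zero x one_ne_zero]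

theorem stmt_11 {U V X : Type*}
    (μ : X →₀ ℝ) (hμ : IsMix μ)
    (G : U → (X →₀ ℝ)) (hG : ∀ u, IsMix (G u))
    (D : V → X → ℝ) (hD : ∀ v x, D v x ∈ Set.Icc (0 : ℝ) 1)
    (φ : ℝ → ℝ) (hφ : ConcaveOn ℝ (Set.Icc 0 1) φ)
    (hpoint : ∀ x : X, ∃ u : U, G u = Finsupp.single x 1)
    (v₀ : V) (hv₀ : ∀ x, D v₀ x = 1 / 2)
    (L : U → V → ℝ)
    (hL : ∀ u v, L u v =
      mixExp μ (fun x => φ (D v x)) + mixExp (G u) (fun x => φ (1 - D v x))) :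
    ∃ Su : U →₀ ℝ, IsMix Su ∧
      mixExp Su (fun u => L u v₀) = 2 * φ (1 / 2) ∧
      ∀ v, mixExp Su (fun u => L u v) =
              mixExp μ (fun x => φ (D v x) + φ (1 - D v x)) ∧
            mixExp Su (fun u => L u v) ≤ 2 * φ (1 / 2) := by
  classical
  choose g hg using hpoint
  refine ⟨Finsupp.mapDomain g μ, ?_, ?_, ?_⟩
  · constructor
    · intro b
      rw [Finsupp.mapDomain, Finsupp.sum_apply]
      apply Finset.sum_nonneg
      intro a _
      by_cases h : g a = b <;> simp [Finsupp.single_apply, h, hμ.1 a]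
    · have : ∑ a ∈ (Finsupp.mapDomain g μ).support, Finsupp.mapDomain g μ a
          = (Finsupp.mapDomain g μ).sum (fun _ m => m) := rfl
      rw [this, Finsupp.sum_mapDomain_index (fun _ => rfl) (fun _ _ _ => rfl)]
      exact hμ.2
  all_goals
    have key : ∀ v, mixExp (Finsupp.mapDomain g μ) (fun u => L u v)
        = mixExp μ (fun x => φ (D v x) + φ (1 - D v x)) := by
      intro v
      rw [mixExp_mapDomain]
      set C := mixExp μ (fun x => φ (D v x)) with hC
      have hLg : ∀ x, L (g x) v = C + φ (1 - D v x) := fun x => by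
        rw [hL, hg, mixExp_single]
      simp only [hLg]
      rw [Finsupp.sum, mixExp]
      have step : ∑ a ∈ μ.support, μ a * (C + φ (1 - D v a))
          = (∑ a ∈ μ.support, μ a) * C + ∑ a ∈ μ.support, μ a * φ (1 - D v a) := by
        rw [Finset.sum_mul, ← Finset.sum_add_distrib]
        exact Finset.sum_congr rfl fun a _ => by ring
      rw [step, hμ.2, one_mul, hC, mixExp, ← Finset.sum_add_distrib]
      exact Finset.sum_congr rfl fun a _ => by ring
  · rw [key v₀]
    rw [mixExp]
    have : ∀ x ∈ μ.support, μ x * (φ (D v₀ x) + φ (1 - D v₀ x)) = μ x * (2 * φ (1/2)) := by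
      intro x _
      rw [hv₀, show (1:ℝ) - 1/2 = 1/2 by norm_num]; ring
    rw [Finset.sum_congr rfl this, ← Finset.sum_mul, hμ.2, one_mul]
  · intro v
    refine ⟨key v, ?_⟩
    rw [key v, mixExp]
    have hbound : ∀ x, φ (D v x) + φ (1 - D v x) ≤ 2 * φ (1/2) := by
      intro x
      have h1 : D v x ∈ Set.Icc (0:ℝ) 1 := hD v x
      have h2 : (1 - D v x) ∈ Set.Icc (0:ℝ) 1 := by
        constructor <;> [linarith [h1.2]; linarith [h1.1]]
      have := hφ.2 h1 h2 (by norm_num : (0:ℝ) ≤ 1/2) (by norm_num : (0:ℝ) ≤ 1/2)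
        (by norm_num)
      simp only [smul_eq_mul] at this
      have heq : (1/2 : ℝ) * D v x + 1/2 * (1 - D v x) = 1/2 := by ring
      rw [heq] at this
      linarith
    calc ∑ x ∈ μ.support, μ x * (φ (D v x) + φ (1 - D v x))
        ≤ ∑ x ∈ μ.support, μ x * (2 * φ (1/2)) := by
          apply Finset.sum_le_sum
          intro x _
          exact mul_le_mul_of_nonneg_left (hbound x) (hμ.1 x)
      _ = 2 * φ (1/2) := by rw [← Finset.sum_mul, hμ.2, one_mul]
end
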